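/- arXiv:2412.08794 — 3 statements merged into one kernel-verified Lean document; each statement's English description precedes it below -/
import Mathlib

section
/- Performance-gap bound (Lemma 2): Suppose value functions satisfy V^π = (1/(1−γ))·∑_{(s,a)} d^π(s,a) r(s,a) and V^{π*} = (1/(1−γ))·∑_{(s,a)} d^{π*}(s,a) r(s,a), where 0 ≤ r(s,a) ≤ R_m, the joint distributions factor as d^π(s,a)=d^π(s)π(a|s) and d^{π*}(s,a)=d^{π*}(s)π*(a|s), and the state-marginal discrepancy satisfies D_TV(d^π(s), d^{π*}(s)) ≤ (γ/(1−γ))·∑_s d^{π*}(s) D_TV(π(·|s), π*(·|s)). Then |V^π − V^{π*}| ≤ (2 R_m/(1−γ)²)·∑_s d^{π*}(s)·D_TV(π(·|s), π*(·|s)). -/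
open Finset

theorem performance_gap_lemma {S A : Type*} [Fintype S] [Fintype A]
    (γ R_m : ℝ) (hγ0 : 0 < γ) (hγ1 : γ < 1)
    (r : S × A → ℝ) (hr0 : ∀ x, 0 ≤ r x) (hrM : ∀ x, r x ≤ R_m)
    (dpi dstar : S → ℝ) (pi pistar : S → A → ℝ)
    (hd0 : ∀ s, 0 ≤ dpi s) (hd1 : ∑ s, dpi s = 1)
    (hs0 : ∀ s, 0 ≤ dstar s) (hs1 : ∑ s, dstar s = 1)
    (hpi0 : ∀ s a, 0 ≤ pi s a) (hpi1 : ∀ s, ∑ a, pi s a = 1)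
    (hps0 : ∀ s a, 0 ≤ pistar s a) (hps1 : ∀ s, ∑ a, pistar s a = 1)
    (Vpi Vstar : ℝ)
    (hVpi : Vpi = (1/(1-γ)) * ∑ x : S × A, dpi x.1 * pi x.1 x.2 * r x)
    (hVstar : Vstar = (1/(1-γ)) * ∑ x : S × A, dstar x.1 * pistar x.1 x.2 * r x)
    (herr : (1/2) * ∑ s, |dpi s - dstar s| ≤
      (γ/(1-γ)) * ∑ s, dstar s * ((1/2) * ∑ a, |pi s a - pistar s a|)) :
    |Vpi - Vstar| ≤
      (2 * R_m / (1-γ)^2) * ∑ s, dstar s * ((1/2) * ∑ a, |pi s a - pistar s a|) := by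
  have h1γ : 0 < 1 - γ := by linarith
  have hS : Nonempty S := by
    by_contra h
    rw [not_nonempty_iff] at h
    simp at hd1
  have hA : Nonempty A := by
    by_contra h
    rw [not_nonempty_iff] at h
    have := hpi1 (Classical.arbitrary S)
    simp at this
  obtain ⟨s0⟩ := hS
  obtain ⟨a0⟩ := hA
  have hRm : 0 ≤ R_m := le_trans (hr0 (s0, a0)) (hrM (s0, a0))
  set E := ∑ s, dstar s * ((1/2) * ∑ a, |pi s a - pistar s a|) with hE
  have hE0 : 0 ≤ E :=
    Finset.sum_nonneg fun s _ => mul_nonneg (hs0 s)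
      (mul_nonneg (by norm_num) (Finset.sum_nonneg fun a _ => abs_nonneg _))
  set c : S × A → ℝ := fun x => dpi x.1 * pi x.1 x.2 - dstar x.1 * pistar x.1 x.2 with hc
  have key : ∑ x : S × A, |c x| ≤ (∑ s, |dpi s - dstar s|) + 2 * E := by
    have h1 : ∀ x : S × A, |c x| ≤
        |dpi x.1 - dstar x.1| * pi x.1 x.2 + dstar x.1 * |pi x.1 x.2 - pistar x.1 x.2| := by
      intro x
      have heq : c x = (dpi x.1 - dstar x.1) * pi x.1 x.2
          + dstar x.1 * (pi x.1 x.2 - pistar x.1 x.2) := by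
        simp only [hc]; ring
      rw [heq]
      calc |(dpi x.1 - dstar x.1) * pi x.1 x.2 + dstar x.1 * (pi x.1 x.2 - pistar x.1 x.2)|
          ≤ |(dpi x.1 - dstar x.1) * pi x.1 x.2| + |dstar x.1 * (pi x.1 x.2 - pistar x.1 x.2)| :=
            abs_add_le _ _
        _ = |dpi x.1 - dstar x.1| * pi x.1 x.2 + dstar x.1 * |pi x.1 x.2 - pistar x.1 x.2| := by
            rw [abs_mul, abs_mul, abs_of_nonneg (hpi0 _ _), abs_of_nonneg (hs0 _)]
    calc ∑ x : S × A, |c x|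
        ≤ ∑ x : S × A, (|dpi x.1 - dstar x.1| * pi x.1 x.2
            + dstar x.1 * |pi x.1 x.2 - pistar x.1 x.2|) :=
          Finset.sum_le_sum fun x _ => h1 x
      _ = (∑ s, |dpi s - dstar s|) + 2 * E := by
          rw [Finset.sum_add_distrib]
          congr 1
          · rw [Fintype.sum_prod_type]
            simp_rw [← Finset.mul_sum, hpi1, mul_one]
          · rw [Fintype.sum_prod_type, hE, Finset.mul_sum]
            apply Finset.sum_congr rfl
            intro s _
            simp only [← Finset.mul_sum]
            ring
  have hD : (∑ s, |dpi s - dstar s|) ≤ 2 * (γ / (1 - γ)) * E := by linarith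
  have hgap : Vpi - Vstar = (1/(1-γ)) * ∑ x : S × A, c x * r x := by
    rw [hVpi, hVstar, ← mul_sub, ← Finset.sum_sub_distrib]
    congr 1
    apply Finset.sum_congr rfl
    intro x _
    simp only [hc]
    ring
  have habs : |Vpi - Vstar| ≤ (1/(1-γ)) * ((∑ x : S × A, |c x|) * R_m) := by
    rw [hgap, abs_mul, abs_of_nonneg (by positivity : (0:ℝ) ≤ 1/(1-γ))]
    apply mul_le_mul_of_nonneg_left _ (by positivity)
    calc |∑ x : S × A, c x * r x| ≤ ∑ x : S × A, |c x * r x| := Finset.abs_sum_le_sum_abs _ _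
      _ ≤ ∑ x : S × A, |c x| * R_m := by
          apply Finset.sum_le_sum
          intro x _
          rw [abs_mul, abs_of_nonneg (hr0 x)]
          exact mul_le_mul_of_nonneg_left (hrM x) (abs_nonneg _)
      _ = (∑ x : S × A, |c x|) * R_m := by rw [← Finset.sum_mul]
  have hfinal : (1/(1-γ)) * (((2 * (γ / (1 - γ)) * E) + 2 * E) * R_m)
      = 2 * R_m / (1-γ)^2 * E := by
    field_simp
    ring
  calc |Vpi - Vstar| ≤ (1/(1-γ)) * ((∑ x : S × A, |c x|) * R_m) := habs
    _ ≤ (1/(1-γ)) * (((2 * (γ / (1 - γ)) * E) + 2 * E) * R_m) := by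
        apply mul_le_mul_of_nonneg_left _ (by positivity)
        apply mul_le_mul_of_nonneg_right _ hRm
        linarith [key, hD]
    _ = 2 * R_m / (1-γ)^2 * E := hfinal
end

section
/- Theorem 1 (performance gap): Under the assumptions that ∑_s d^{π*}(s)·D_KL(π(·|s)||π_s(·|s)) ≤ ε₁ and ∑_s d^{π*}(s)·D_KL(π_s(·|s)||π*(·|s)) ≤ ε₂, that rewards satisfy 0 ≤ r ≤ R_m, and that the state-distribution error-propagation bound D_TV(d^π(s),d^{π*}(s)) ≤ (γ/(1−γ))·∑_s d^{π*}(s) D_TV(π(·|s),π*(·|s)) holds, the value gap satisfies V^{π*} − V^π ≤ (2R_m/(1−γ)²)·(sqrt(ε₁/2)+sqrt(ε₂/2)). -/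
/-!
The value gap is the expectation of a reward with values in `[0, R_m]` under the difference of
the two joint state-action distributions, so it is at most `2 R_m / (1 - γ)` times their total
variation. Writing `d^π π - d^{π*} π* = (d^π - d^{π*}) π + d^{π*} (π - π*)` and using the
error-propagation hypothesis, that total variation is at most `1 / (1 - γ)` times the expected
policy distance `∑ d^{π*}(s) D_TV(π(·|s), π*(·|s))`. The triangle inequality through `π_s`,
Pinsker's inequality and Jensen's inequality for `√` bound the latter by `√(ε₁/2) + √(ε₂/2)`.

Pinsker's inequality follows from the pointwise estimate `3 (x - 1)² ≤ 2 (x + 2) klFun x` and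
Cauchy-Schwarz with the weights `(p + 2 q) / 3`, which sum to one.
-/

open Finset Real InformationTheory

open Set in
theorem isMinOn_of_hasDerivAt_of_sign {D : Set ℝ} (hD : Convex ℝ D) {f f' : ℝ → ℝ} {c : ℝ}
    (hc : c ∈ D) (hf : ∀ x ∈ D, HasDerivAt f (f' x) x)
    (hsign : ∀ x ∈ D, 0 ≤ (x - c) * f' x) : IsMinOn f D c := by
  have hcont : ContinuousOn f D := fun x hx => (hf x hx).continuousAt.continuousWithinAt
  have hderiv : ∀ D' ⊆ D, ∀ x ∈ interior D', HasDerivWithinAt f (f' x) (interior D') x :=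
    fun D' hD' x hx => (hf x (hD' (interior_subset hx))).hasDerivWithinAt
  intro x hx
  rcases le_total c x with hcx | hxc
  · refine monotoneOn_of_hasDerivWithinAt_nonneg (hD.inter (convex_Ici c))
      (hcont.mono inter_subset_left) (hderiv _ inter_subset_left) (fun y hy => ?_)
      ⟨hc, self_mem_Ici⟩ ⟨hx, hcx⟩ hcx
    rw [interior_inter, interior_Ici] at hy
    exact nonneg_of_mul_nonneg_right (hsign y (interior_subset hy.1)) (sub_pos.2 hy.2)
  · refine antitoneOn_of_hasDerivWithinAt_nonpos (hD.inter (convex_Iic c))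
      (hcont.mono inter_subset_left) (hderiv _ inter_subset_left) (fun y hy => ?_)
      ⟨hx, hxc⟩ ⟨hc, self_mem_Iic⟩ hxc
    rw [interior_inter, interior_Iic] at hy
    exact nonpos_of_mul_nonneg_right (hsign y (interior_subset hy.1)) (sub_neg.2 hy.2)

open Set in
theorem monotoneOn_add_one_mul_log_sub :
    MonotoneOn (fun x => (x + 1) * log x - 2 * (x - 1)) (Ioi 0) := by
  have hderiv (x : ℝ) (hx : 0 < x) :
      HasDerivAt (fun x => (x + 1) * log x - 2 * (x - 1)) (log x + x⁻¹ - 1) x := by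
    refine ((((hasDerivAt_id x).add_const 1).mul (hasDerivAt_log (ne_of_gt hx))).sub
      (((hasDerivAt_id x).sub_const 1).const_mul 2)).congr_deriv ?_
    rw [id, add_mul, mul_inv_cancel₀ (ne_of_gt hx)]
    ring
  refine monotoneOn_of_hasDerivWithinAt_nonneg (convex_Ioi 0) (f' := fun x => log x + x⁻¹ - 1)
    (fun x hx => (hderiv x hx).continuousAt.continuousWithinAt) (fun x hx => ?_) (fun x hx => ?_)
  · rw [interior_Ioi] at hx ⊢
    exact (hderiv x hx).hasDerivWithinAt
  · rw [interior_Ioi] at hx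
    linarith [one_sub_inv_le_log_of_pos hx]

theorem sub_one_mul_add_one_mul_log_sub_nonneg {x : ℝ} (hx : 0 < x) :
    0 ≤ (x - 1) * ((x + 1) * log x - 2 * (x - 1)) := by
  have h1 : (1 : ℝ) ∈ Set.Ioi 0 := Set.mem_Ioi.2 one_pos
  rcases le_total 1 x with h | h
  · have hG := monotoneOn_add_one_mul_log_sub h1 hx h
    simp only [log_one] at hG
    exact mul_nonneg (by linarith) (by linarith)
  · have hG := monotoneOn_add_one_mul_log_sub hx h1 h
    simp only [log_one] at hG
    exact mul_nonneg_of_nonpos_of_nonpos (by linarith) (by linarith)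

open Set in
theorem three_mul_sq_sub_one_le_klFun {x : ℝ} (hx : 0 ≤ x) :
    3 * (x - 1) ^ 2 ≤ 2 * (x + 2) * klFun x := by
  rcases hx.eq_or_lt with rfl | hx
  · norm_num [klFun_zero]
  have hderiv : ∀ y ∈ Ioi (0 : ℝ), HasDerivAt (fun x => 2 * (x + 2) * klFun x - 3 * (x - 1) ^ 2)
      (4 * ((y + 1) * log y - 2 * (y - 1))) y := by
    intro y hy
    refine (((((hasDerivAt_id y).add_const 2).const_mul 2).mul
      (hasDerivAt_klFun (ne_of_gt hy))).sub
        ((((hasDerivAt_id y).sub_const 1).fun_pow 2).const_mul 3)).congr_deriv ?_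
    simp only [klFun_apply, id]
    ring
  have hmin := isMinOn_of_hasDerivAt_of_sign (convex_Ioi 0) (mem_Ioi.2 one_pos) hderiv
    (fun y hy => by nlinarith [sub_one_mul_add_one_mul_log_sub_nonneg (mem_Ioi.1 hy)]) hx
  simp only [mem_ofPred_eq, klFun_one] at hmin
  linarith

section Discrete

variable {ι : Type*} [Fintype ι]

/-- For `q i = 0` the summand is `p i * log (p i / 0) = 0`, not `∞`: the lemmas below assume
`p` absolutely continuous with respect to `q`. -/
noncomputable def discreteKL (p q : ι → ℝ) : ℝ := ∑ i, p i * log (p i / q i)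

noncomputable def discreteTV (p q : ι → ℝ) : ℝ := (1 / 2) * ∑ i, |p i - q i|

theorem discreteTV_comm (p q : ι → ℝ) : discreteTV p q = discreteTV q p := by
  simp only [discreteTV, abs_sub_comm]

theorem discreteTV_le_add (p q r : ι → ℝ) :
    discreteTV p r ≤ discreteTV p q + discreteTV q r := by
  rw [discreteTV, discreteTV, discreteTV, ← mul_add, ← sum_add_distrib]
  gcongr with i
  exact abs_sub_le _ _ _

theorem mul_log_div_sub_add_eq_mul_klFun {p q : ℝ} (hpq : q = 0 → p = 0) :
    p * log (p / q) - p + q = q * klFun (p / q) := by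
  rcases eq_or_ne q 0 with hq | hq
  · simp [hq, hpq hq]
  · rw [klFun_apply]
    field_simp
    ring

theorem three_mul_sq_sub_le_mul_klFun {p q : ℝ} (hp : 0 ≤ p) (hq : 0 ≤ q)
    (hpq : q = 0 → p = 0) : 3 * (p - q) ^ 2 ≤ (p + 2 * q) * (2 * (q * klFun (p / q))) := by
  rcases hq.eq_or_lt with rfl | hq
  · simp [hpq rfl]
  have hp_eq : p = q * (p / q) := (mul_div_cancel₀ p hq.ne').symm
  calc 3 * (p - q) ^ 2 = q ^ 2 * (3 * (p / q - 1) ^ 2) := by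
        nth_rw 1 [hp_eq]; ring
    _ ≤ q ^ 2 * (2 * (p / q + 2) * klFun (p / q)) :=
        mul_le_mul_of_nonneg_left (three_mul_sq_sub_one_le_klFun (div_nonneg hp hq.le))
          (sq_nonneg q)
    _ = (p + 2 * q) * (2 * (q * klFun (p / q))) := by
        nth_rw 3 [hp_eq]; ring

variable {p q : ι → ℝ}

theorem sq_sum_abs_sub_le_two_mul_discreteKL (hp : p ∈ stdSimplex ℝ ι)
    (hq : q ∈ stdSimplex ℝ ι) (hpq : ∀ i, 0 < p i → 0 < q i) :
    (∑ i, |p i - q i|) ^ 2 ≤ 2 * discreteKL p q := by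
  have hpq' (i : ι) (hqi : q i = 0) : p i = 0 :=
    le_antisymm (not_lt.1 fun hpi => (hpq i hpi).ne' hqi) (hp.1 i)
  have hcs := sum_sq_le_sum_mul_sum_of_sq_le_mul univ (r := fun i => |p i - q i|)
    (f := fun i => (p i + 2 * q i) / 3) (fun i _ => by linarith [hp.1 i, hq.1 i])
    (fun i _ => mul_nonneg zero_le_two
      (mul_nonneg (hq.1 i) (klFun_nonneg (div_nonneg (hp.1 i) (hq.1 i)))))
    (fun i _ => by
      rw [sq_abs]
      linarith [three_mul_sq_sub_le_mul_klFun (hp.1 i) (hq.1 i) (hpq' i)])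
  have hweights : ∑ i, (p i + 2 * q i) / 3 = 1 := by
    rw [← sum_div, sum_add_distrib, ← mul_sum, hp.2, hq.2]
    norm_num
  have hkl : ∑ i, 2 * (q i * klFun (p i / q i)) = 2 * discreteKL p q := by
    simp only [← mul_log_div_sub_add_eq_mul_klFun (hpq' _), ← mul_sum, sum_add_distrib,
      sum_sub_distrib, hp.2, hq.2, discreteKL]
    ring
  rwa [hweights, one_mul, hkl] at hcs

theorem discreteKL_nonneg (hp : p ∈ stdSimplex ℝ ι) (hq : q ∈ stdSimplex ℝ ι)
    (hpq : ∀ i, 0 < p i → 0 < q i) : 0 ≤ discreteKL p q := by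
  nlinarith [sq_sum_abs_sub_le_two_mul_discreteKL hp hq hpq, sq_nonneg (∑ i, |p i - q i|)]

theorem discreteTV_le_sqrt_discreteKL (hp : p ∈ stdSimplex ℝ ι) (hq : q ∈ stdSimplex ℝ ι)
    (hpq : ∀ i, 0 < p i → 0 < q i) : discreteTV p q ≤ √(discreteKL p q / 2) := by
  have h := sq_sum_abs_sub_le_two_mul_discreteKL hp hq hpq
  rw [discreteTV, le_sqrt (by positivity) (by linarith [sq_nonneg (∑ i, |p i - q i|)])]
  linarith

theorem sum_mul_sub_sum_mul_le_two_mul_discreteTV (u v r : ι → ℝ) {R : ℝ}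
    (hr0 : ∀ i, 0 ≤ r i) (hrR : ∀ i, r i ≤ R) :
    ∑ i, u i * r i - ∑ i, v i * r i ≤ 2 * R * discreteTV u v := by
  rw [discreteTV, ← sum_sub_distrib, mul_sum, mul_sum]
  gcongr with i
  calc u i * r i - v i * r i ≤ |u i - v i| * r i := by
        rw [← sub_mul]
        exact mul_le_mul_of_nonneg_right (le_abs_self _) (hr0 i)
    _ ≤ |u i - v i| * R := mul_le_mul_of_nonneg_left (hrR i) (abs_nonneg _)
    _ = 2 * R * (1 / 2 * |u i - v i|) := by ring

theorem sum_mul_sqrt_le_sqrt_sum_mul {d k : ι → ℝ} (hd : d ∈ stdSimplex ℝ ι)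
    (hk : ∀ i, 0 ≤ k i) : ∑ i, d i * √(k i) ≤ √(∑ i, d i * k i) :=
  strictConcaveOn_sqrt.concaveOn.le_map_sum (fun i _ => hd.1 i) hd.2 (fun i _ => hk i)

end Discrete

section Policy

variable {S A : Type*} [Fintype S] [Fintype A]

theorem sum_mul_discreteTV_le_sqrt {d : S → ℝ} (hd : d ∈ stdSimplex ℝ S) {p q : S → A → ℝ}
    (hp : ∀ s, p s ∈ stdSimplex ℝ A) (hq : ∀ s, q s ∈ stdSimplex ℝ A)
    (hpq : ∀ s a, 0 < p s a → 0 < q s a) :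
    ∑ s, d s * discreteTV (p s) (q s) ≤ √((∑ s, d s * discreteKL (p s) (q s)) / 2) :=
  calc ∑ s, d s * discreteTV (p s) (q s)
      ≤ ∑ s, d s * √(discreteKL (p s) (q s) / 2) := by
        gcongr with s
        · exact hd.1 s
        · exact discreteTV_le_sqrt_discreteKL (hp s) (hq s) (hpq s)
    _ ≤ √(∑ s, d s * (discreteKL (p s) (q s) / 2)) :=
        sum_mul_sqrt_le_sqrt_sum_mul hd
          fun s => div_nonneg (discreteKL_nonneg (hp s) (hq s) (hpq s)) zero_le_two
    _ = √((∑ s, d s * discreteKL (p s) (q s)) / 2) := by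
        simp only [sum_div, mul_div_assoc]

theorem sum_mul_discreteTV_le_sqrt_add_sqrt {d : S → ℝ} (hd : d ∈ stdSimplex ℝ S)
    {p q r : S → A → ℝ} (hp : ∀ s, p s ∈ stdSimplex ℝ A) (hq : ∀ s, q s ∈ stdSimplex ℝ A)
    (hr : ∀ s, r s ∈ stdSimplex ℝ A) (hpq : ∀ s a, 0 < p s a → 0 < q s a)
    (hqr : ∀ s a, 0 < q s a → 0 < r s a) :
    ∑ s, d s * discreteTV (p s) (r s) ≤
      √((∑ s, d s * discreteKL (p s) (q s)) / 2) +
        √((∑ s, d s * discreteKL (q s) (r s)) / 2) :=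
  calc ∑ s, d s * discreteTV (p s) (r s)
      ≤ ∑ s, d s * discreteTV (p s) (q s) + ∑ s, d s * discreteTV (q s) (r s) := by
        rw [← sum_add_distrib]
        gcongr with s
        rw [← mul_add]
        exact mul_le_mul_of_nonneg_left (discreteTV_le_add _ _ _) (hd.1 s)
    _ ≤ _ := add_le_add (sum_mul_discreteTV_le_sqrt hd hp hq hpq)
        (sum_mul_discreteTV_le_sqrt hd hq hr hqr)

theorem discreteTV_joint_le (d d' : S → ℝ) (hd' : ∀ s, 0 ≤ d' s) {κ : S → A → ℝ}
    (hκ : ∀ s, κ s ∈ stdSimplex ℝ A) (κ' : S → A → ℝ) :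
    discreteTV (fun x : S × A => d x.1 * κ x.1 x.2) (fun x => d' x.1 * κ' x.1 x.2) ≤
      discreteTV d d' + ∑ s, d' s * discreteTV (κ s) (κ' s) := by
  have hpoint (s : S) (a : A) : |d s * κ s a - d' s * κ' s a| ≤
      |d s - d' s| * κ s a + d' s * |κ s a - κ' s a| :=
    calc |d s * κ s a - d' s * κ' s a|
        = |(d s - d' s) * κ s a + d' s * (κ s a - κ' s a)| := by ring_nf
      _ ≤ |(d s - d' s) * κ s a| + |d' s * (κ s a - κ' s a)| := abs_add_le _ _
      _ = |d s - d' s| * κ s a + d' s * |κ s a - κ' s a| := by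
          rw [abs_mul, abs_mul, abs_of_nonneg ((hκ s).1 a), abs_of_nonneg (hd' s)]
  have hsum : ∑ x : S × A, |d x.1 * κ x.1 x.2 - d' x.1 * κ' x.1 x.2| ≤
      ∑ s, |d s - d' s| + ∑ s, d' s * ∑ a, |κ s a - κ' s a| := by
    rw [Fintype.sum_prod_type, ← sum_add_distrib]
    gcongr with s
    calc ∑ a, |d s * κ s a - d' s * κ' s a|
        ≤ ∑ a, (|d s - d' s| * κ s a + d' s * |κ s a - κ' s a|) :=
          sum_le_sum fun a _ => hpoint s a
      _ = |d s - d' s| + d' s * ∑ a, |κ s a - κ' s a| := by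
          rw [sum_add_distrib, ← mul_sum, ← mul_sum, (hκ s).2, mul_one]
  simp only [discreteTV, mul_left_comm _ (1 / 2 : ℝ), ← mul_sum]
  linarith

end Policy

theorem theorem1_performance_gap_general {S A : Type*} [Fintype S] [Fintype A]
    (γ R_m ε₁ ε₂ : ℝ) (hγ1 : γ < 1)
    (r : S × A → ℝ) (hr0 : ∀ x, 0 ≤ r x) (hrM : ∀ x, r x ≤ R_m)
    (dpi dstar : S → ℝ) (pi pis pistar : S → A → ℝ)
    (hs0 : ∀ s, 0 ≤ dstar s) (hs1 : ∑ s, dstar s = 1)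
    (hpi0 : ∀ s a, 0 ≤ pi s a) (hpi1 : ∀ s, ∑ a, pi s a = 1)
    (hpis0 : ∀ s a, 0 ≤ pis s a) (hpis1 : ∀ s, ∑ a, pis s a = 1)
    (hps0 : ∀ s a, 0 ≤ pistar s a) (hps1 : ∀ s, ∑ a, pistar s a = 1)
    (hac1 : ∀ s a, 0 < pi s a → 0 < pis s a)
    (hac2 : ∀ s a, 0 < pis s a → 0 < pistar s a)
    (hkl1 : ∑ s, dstar s * ∑ a, pi s a * Real.log (pi s a / pis s a) ≤ ε₁)
    (hkl2 : ∑ s, dstar s * ∑ a, pis s a * Real.log (pis s a / pistar s a) ≤ ε₂)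
    (herr : (1/2) * ∑ s, |dpi s - dstar s| ≤
      (γ/(1-γ)) * ∑ s, dstar s * ((1/2) * ∑ a, |pi s a - pistar s a|))
    (Vpi Vstar : ℝ)
    (hVpi : Vpi = (1/(1-γ)) * ∑ x : S × A, dpi x.1 * pi x.1 x.2 * r x)
    (hVstar : Vstar = (1/(1-γ)) * ∑ x : S × A, dstar x.1 * pistar x.1 x.2 * r x) :
    Vstar - Vpi ≤
      (2 * R_m / (1-γ)^2) * (Real.sqrt (ε₁ / 2) + Real.sqrt (ε₂ / 2)) := by
  have hγ : 0 < 1 - γ := sub_pos.2 hγ1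
  have hpi : ∀ s, pi s ∈ stdSimplex ℝ A := fun s => ⟨hpi0 s, hpi1 s⟩
  set T := ∑ s, dstar s * discreteTV (pi s) (pistar s)
  have hT : T ≤ √(ε₁ / 2) + √(ε₂ / 2) :=
    (sum_mul_discreteTV_le_sqrt_add_sqrt ⟨hs0, hs1⟩ hpi (fun s => ⟨hpis0 s, hpis1 s⟩)
      (fun s => ⟨hps0 s, hps1 s⟩) hac1 hac2).trans <|
        add_le_add (sqrt_le_sqrt (div_le_div_of_nonneg_right hkl1 zero_le_two))
          (sqrt_le_sqrt (div_le_div_of_nonneg_right hkl2 zero_le_two))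
  have hjoint : discreteTV (fun x : S × A => dpi x.1 * pi x.1 x.2)
      (fun x => dstar x.1 * pistar x.1 x.2) ≤ T / (1 - γ) :=
    calc _ ≤ discreteTV dpi dstar + T := discreteTV_joint_le dpi dstar hs0 hpi pistar
      _ ≤ γ / (1 - γ) * T + T := add_le_add_left herr T
      _ = T / (1 - γ) := by field_simp; ring
  have hR : 0 ≤ R_m := by
    obtain ⟨s, -⟩ := nonempty_of_sum_ne_zero (s := univ) (f := dstar) (by simp [hs1])
    obtain ⟨a, -⟩ := nonempty_of_sum_ne_zero (s := univ) (f := pi s) (by simp [hpi1 s])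
    exact (hr0 (s, a)).trans (hrM (s, a))
  calc Vstar - Vpi ≤ 1 / (1 - γ) * (2 * R_m * (T / (1 - γ))) := by
        rw [hVpi, hVstar, ← mul_sub]
        refine mul_le_mul_of_nonneg_left ?_ (by positivity)
        refine (sum_mul_sub_sum_mul_le_two_mul_discreteTV _ _ r hr0 hrM).trans ?_
        rw [discreteTV_comm]
        gcongr
    _ = 2 * R_m / (1 - γ) ^ 2 * T := by field_simp
    _ ≤ _ := by gcongr

theorem theorem1_performance_gap {S A : Type*} [Fintype S] [Fintype A]
    (γ R_m ε₁ ε₂ : ℝ) (hγ0 : 0 < γ) (hγ1 : γ < 1)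
    (r : S × A → ℝ) (hr0 : ∀ x, 0 ≤ r x) (hrM : ∀ x, r x ≤ R_m)
    (dpi dstar : S → ℝ) (pi pis pistar : S → A → ℝ)
    (hd0 : ∀ s, 0 ≤ dpi s) (hd1 : ∑ s, dpi s = 1)
    (hs0 : ∀ s, 0 ≤ dstar s) (hs1 : ∑ s, dstar s = 1)
    (hpi0 : ∀ s a, 0 ≤ pi s a) (hpi1 : ∀ s, ∑ a, pi s a = 1)
    (hpis0 : ∀ s a, 0 ≤ pis s a) (hpis1 : ∀ s, ∑ a, pis s a = 1)
    (hps0 : ∀ s a, 0 ≤ pistar s a) (hps1 : ∀ s, ∑ a, pistar s a = 1)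
    (hac1 : ∀ s a, 0 < pi s a → 0 < pis s a)
    (hac2 : ∀ s a, 0 < pis s a → 0 < pistar s a)
    (hkl1 : ∑ s, dstar s * ∑ a, pi s a * Real.log (pi s a / pis s a) ≤ ε₁)
    (hkl2 : ∑ s, dstar s * ∑ a, pis s a * Real.log (pis s a / pistar s a) ≤ ε₂)
    (herr : (1/2) * ∑ s, |dpi s - dstar s| ≤
      (γ/(1-γ)) * ∑ s, dstar s * ((1/2) * ∑ a, |pi s a - pistar s a|))
    (Vpi Vstar : ℝ)
    (hVpi : Vpi = (1/(1-γ)) * ∑ x : S × A, dpi x.1 * pi x.1 x.2 * r x)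
    (hVstar : Vstar = (1/(1-γ)) * ∑ x : S × A, dstar x.1 * pistar x.1 x.2 * r x) :
    Vstar - Vpi ≤
      (2 * R_m / (1-γ)^2) * (Real.sqrt (ε₁ / 2) + Real.sqrt (ε₂ / 2)) :=
  theorem1_performance_gap_general γ R_m ε₁ ε₂ hγ1 r hr0 hrM dpi dstar pi pis pistar hs0 hs1 hpi0
    hpi1 hpis0 hpis1 hps0 hps1 hac1 hac2 hkl1 hkl2 herr Vpi Vstar hVpi hVstar
end

section
/- Decomposition of value difference: With V^π = (1/(1−γ))·∑_{(s,a)} d^π(s)π(a|s) r(s,a) and V^{π*} = (1/(1−γ))·∑_{(s,a)} d^{π*}(s)π*(a|s) r(s,a), where 0 ≤ r ≤ R_m, the value gap satisfies |V^π − V^{π*}| ≤ (2R_m/(1−γ))·[ D_TV(d^π(s), d^{π*}(s)) + ∑_s d^{π*}(s)·D_TV(π(·|s), π*(·|s)) ]. -/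
open Finset

theorem value_diff_decomposition {S A : Type*} [Fintype S] [Fintype A]
    (γ R_m : ℝ) (hγ0 : 0 < γ) (hγ1 : γ < 1)
    (r : S × A → ℝ) (hr0 : ∀ x, 0 ≤ r x) (hrM : ∀ x, r x ≤ R_m)
    (dpi dstar : S → ℝ) (pi pistar : S → A → ℝ)
    (hd0 : ∀ s, 0 ≤ dpi s) (hd1 : ∑ s, dpi s = 1)
    (hs0 : ∀ s, 0 ≤ dstar s) (hs1 : ∑ s, dstar s = 1)
    (hpi0 : ∀ s a, 0 ≤ pi s a) (hpi1 : ∀ s, ∑ a, pi s a = 1)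
    (hps0 : ∀ s a, 0 ≤ pistar s a) (hps1 : ∀ s, ∑ a, pistar s a = 1)
    (Vpi Vstar : ℝ)
    (hVpi : Vpi = (1/(1-γ)) * ∑ x : S × A, dpi x.1 * pi x.1 x.2 * r x)
    (hVstar : Vstar = (1/(1-γ)) * ∑ x : S × A, dstar x.1 * pistar x.1 x.2 * r x) :
    |Vpi - Vstar| ≤
      (2 * R_m / (1-γ)) *
        ((1/2) * ∑ s, |dpi s - dstar s| +
          ∑ s, dstar s * ((1/2) * ∑ a, |pi s a - pistar s a|)) := by
  have hc : 0 < 1 - γ := by linarith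
  have hSne : Nonempty S := by
    by_contra hS
    rw [not_nonempty_iff] at hS
    simp at hd1
  have hAne : Nonempty A := by
    by_contra hA
    rw [not_nonempty_iff] at hA
    obtain ⟨s⟩ := hSne
    have := hpi1 s
    simp at this
  have hRm : 0 ≤ R_m := by
    obtain ⟨s⟩ := hSne; obtain ⟨a⟩ := hAne
    exact (hr0 (s, a)).trans (hrM (s, a))
  set T1 := ∑ x : S × A, (dpi x.1 - dstar x.1) * pi x.1 x.2 * r x with hT1
  set T2 := ∑ x : S × A, dstar x.1 * (pi x.1 x.2 - pistar x.1 x.2) * r x with hT2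
  have hsplit : Vpi - Vstar = (1/(1-γ)) * (T1 + T2) := by
    rw [hVpi, hVstar, ← mul_sub, hT1, hT2, ← Finset.sum_add_distrib,
      ← Finset.sum_sub_distrib]
    congr 1
    apply Finset.sum_congr rfl
    intro x _
    ring
  have hB1 : |T1| ≤ R_m * ∑ s, |dpi s - dstar s| := by
    calc |T1| ≤ ∑ x : S × A, |(dpi x.1 - dstar x.1) * pi x.1 x.2 * r x| :=
          Finset.abs_sum_le_sum_abs _ _
      _ ≤ ∑ x : S × A, |dpi x.1 - dstar x.1| * pi x.1 x.2 * R_m := by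
          apply Finset.sum_le_sum
          intro x _
          rw [abs_mul, abs_mul, abs_of_nonneg (hpi0 _ _), abs_of_nonneg (hr0 _)]
          exact mul_le_mul_of_nonneg_left (hrM x)
            (mul_nonneg (abs_nonneg _) (hpi0 _ _))
      _ = ∑ s, |dpi s - dstar s| * R_m := by
          rw [Fintype.sum_prod_type]
          apply Finset.sum_congr rfl
          intro s _
          have : ∀ a, |dpi s - dstar s| * pi s a * R_m
              = (|dpi s - dstar s| * R_m) * pi s a := fun a => by ring
          simp_rw [this, ← Finset.mul_sum, hpi1, mul_one]
      _ = R_m * ∑ s, |dpi s - dstar s| := by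
          rw [← Finset.sum_mul, mul_comm]
  have hB2 : |T2| ≤ R_m * ∑ s, dstar s * ∑ a, |pi s a - pistar s a| := by
    calc |T2| ≤ ∑ x : S × A, |dstar x.1 * (pi x.1 x.2 - pistar x.1 x.2) * r x| :=
          Finset.abs_sum_le_sum_abs _ _
      _ ≤ ∑ x : S × A, dstar x.1 * |pi x.1 x.2 - pistar x.1 x.2| * R_m := by
          apply Finset.sum_le_sum
          intro x _
          rw [abs_mul, abs_mul, abs_of_nonneg (hs0 _), abs_of_nonneg (hr0 _)]
          exact mul_le_mul_of_nonneg_left (hrM x)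
            (mul_nonneg (hs0 _) (abs_nonneg _))
      _ = ∑ s, dstar s * (∑ a, |pi s a - pistar s a|) * R_m := by
          rw [Fintype.sum_prod_type]
          apply Finset.sum_congr rfl
          intro s _
          have : ∀ a, dstar s * |pi s a - pistar s a| * R_m
              = (dstar s * R_m) * |pi s a - pistar s a| := fun a => by ring
          simp_rw [this, ← Finset.mul_sum]
          ring
      _ = R_m * ∑ s, dstar s * ∑ a, |pi s a - pistar s a| := by
          rw [← Finset.sum_mul, mul_comm]
  have hsum : ∑ s, dstar s * ((1/2) * ∑ a, |pi s a - pistar s a|)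
      = (1/2) * ∑ s, dstar s * ∑ a, |pi s a - pistar s a| := by
    rw [Finset.mul_sum]
    apply Finset.sum_congr rfl
    intro s _
    ring
  rw [hsplit, hsum, abs_mul, abs_of_pos (by positivity : (0:ℝ) < 1/(1-γ))]
  have habs : |T1 + T2| ≤ |T1| + |T2| := abs_add_le _ _
  have h1 : (1/(1-γ)) * |T1 + T2| ≤ (1/(1-γ)) * (|T1| + |T2|) := by
    apply mul_le_mul_of_nonneg_left habs (by positivity)
  refine h1.trans ?_
  have h2 : |T1| + |T2| ≤ R_m * (∑ s, |dpi s - dstar s|)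
      + R_m * ∑ s, dstar s * ∑ a, |pi s a - pistar s a| := by linarith
  calc (1/(1-γ)) * (|T1| + |T2|)
      ≤ (1/(1-γ)) * (R_m * (∑ s, |dpi s - dstar s|)
        + R_m * ∑ s, dstar s * ∑ a, |pi s a - pistar s a|) := by
        apply mul_le_mul_of_nonneg_left h2 (by positivity)
    _ = (2 * R_m / (1-γ)) *
        ((1/2) * ∑ s, |dpi s - dstar s| +
          (1/2) * ∑ s, dstar s * ∑ a, |pi s a - pistar s a|) := by
        field_simp
end
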